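/- arXiv:2010.16238 — 8 statements merged into one kernel-verified Lean document; each statement's English description precedes it below -/
import Mathlib

section
/- For nonzero complex numbers α₁ and any complex α₂, α₃, α₄, the 4×4 matrix A = [[-α₃, -α₄, -α₃²/α₁, β],[0, -α₃, 0, -α₃²/α₁],[α₁, α₂, α₃, α₄],[0, α₁, 0, α₃]] with β = (α₁ + α₃²α₂ - 2α₁α₃α₄)/α₁² satisfies A² = J₂(0) ⊕ J₂(0). -/
open Matrix

theorem sq_root_J2_plus_J2_family_one (α₁ α₂ α₃ α₄ : ℂ) (h₁ : α₁ ≠ 0) :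
    (!![-α₃, -α₄, -α₃ ^ 2 / α₁, (α₁ + α₃ ^ 2 * α₂ - 2 * α₁ * α₃ * α₄) / α₁ ^ 2;
        0, -α₃, 0, -α₃ ^ 2 / α₁;
        α₁, α₂, α₃, α₄;
        0, α₁, 0, α₃]) ^ 2
      = !![0, 1, 0, 0; 0, 0, 0, 0; 0, 0, 0, 1; 0, 0, 0, 0] := by
  rw [sq]
  ext i j
  fin_cases i <;> fin_cases j <;>
    simp [Matrix.mul_apply, Fin.sum_univ_four, Matrix.vecHead, Matrix.vecTail] <;>
    (try field_simp) <;> ring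
end

section
/- For nonzero complex γ₁, γ₂ and any complex γ₃, the 4×4 matrix A = [[0, γ₁, γ₂, γ₃],[0,0,0,γ₂],[0, 1/γ₂, 0, -γ₁],[0,0,0,0]] satisfies A² = J₂(0) ⊕ J₂(0). -/
open Matrix

theorem sq_root_J2_plus_J2_family_two (γ₁ γ₂ γ₃ : ℂ) (h₁ : γ₁ ≠ 0) (h₂ : γ₂ ≠ 0) :
    (!![0, γ₁, γ₂, γ₃;
        0, 0, 0, γ₂;
        0, 1 / γ₂, 0, -γ₁;
        0, 0, 0, 0]) ^ 2
      = !![0, 1, 0, 0; 0, 0, 0, 0; 0, 0, 0, 1; 0, 0, 0, 0] := by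
  rw [pow_two]
  ext i j
  fin_cases i <;> fin_cases j <;>
    simp [Matrix.mul_apply, Fin.sum_univ_succ, vecHead, vecTail] <;>
    (try field_simp) <;> ring
end

section
/- A nilpotent complex matrix B₀ whose Jordan form consists only of blocks of size 1 and 2 has a square root (some matrix A with A² = B₀) if and only if: either the number of Jordan blocks of size 2 is even, or it is odd and there is at least one Jordan block of size 1. -/
open Matrix Module Submodule LinearMap

variable {K : Type*} [Field K] {V : Type*} [AddCommGroup V] [Module K V] [FiniteDimensional K V]

lemma aux_finrank_map_add (f : V →ₗ[K] V) (U : Submodule K V) :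
    finrank K (U.map f) + finrank K (U ⊓ ker f : Submodule K V) = finrank K U := by
  have h := LinearMap.finrank_range_add_finrank_ker (f.domRestrict U)
  rw [LinearMap.range_domRestrict, LinearMap.ker_domRestrict] at h
  have e1 : (ker f).comap U.subtype = (U ⊓ ker f).comap U.subtype := by
    rw [Submodule.comap_inf, Submodule.comap_subtype_self, top_inf_eq]
  have e2 : finrank K ((ker f).comap U.subtype) = finrank K (U ⊓ ker f : Submodule K V) := by
    rw [e1]; exact (Submodule.comapSubtypeEquivOfLe inf_le_left).finrank_eq
  rw [e2] at h; exact h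

/-- Frobenius rank inequality for endomorphisms. -/
lemma aux_frobenius (f g h : V →ₗ[K] V) :
    finrank K (range (f ∘ₗ g)) + finrank K (range (g ∘ₗ h)) ≤
      finrank K (range g) + finrank K (range (f ∘ₗ (g ∘ₗ h))) := by
  have h1 := aux_finrank_map_add f (range g)
  have h2 := aux_finrank_map_add f (range (g ∘ₗ h))
  have e1 : (range g).map f = range (f ∘ₗ g) := (LinearMap.range_comp _ _).symm
  have e2 : (range (g ∘ₗ h)).map f = range (f ∘ₗ (g ∘ₗ h)) := (LinearMap.range_comp _ _).symm
  have hle : range (g ∘ₗ h) ⊓ ker f ≤ range g ⊓ ker f :=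
    inf_le_inf_right _ (LinearMap.range_comp_le_range _ _)
  have h3 : finrank K (range (g ∘ₗ h) ⊓ ker f : Submodule K V)
      ≤ finrank K (range g ⊓ ker f : Submodule K V) := Submodule.finrank_mono hle
  rw [e1] at h1; rw [e2] at h2
  omega

lemma aux_frobenius_mul (f g h : Module.End K V) :
    finrank K (range (f * g)) + finrank K (range (g * h)) ≤
      finrank K (range g) + finrank K (range (f * g * h)) := by
  rw [mul_assoc]
  simpa only [Module.End.mul_eq_comp] using aux_frobenius f g h

lemma aux_even (a : Module.End K V) (h4 : a ^ 4 = 0)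
    (hn : finrank K V = 2 * finrank K (range (a ^ 2))) :
    Even (finrank K (range (a ^ 2))) := by
  set n := finrank K V with hnn
  set r := finrank K (range a) with hr
  set t := finrank K (range (a ^ 2)) with ht
  set r3 := finrank K (range (a ^ 3)) with hr3
  have hpow : ∀ x : Module.End K V, x ≠ x → True := fun _ _ => trivial
  have e1 : a * a = a ^ 2 := (sq a).symm
  have e2 : a ^ 2 * a = a ^ 3 := (pow_succ a 2).symm
  have e3 : a ^ 3 * a = a ^ 4 := (pow_succ a 3).symm
  have e4 : a * a ^ 2 = a ^ 3 := (pow_succ' a 2).symm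
  have hF1 : t + t ≤ r + r3 := by
    have := aux_frobenius_mul a a a
    rw [e1, e2] at this
    exact this
  have hF2 : r3 + r3 ≤ t + 0 := by
    have := aux_frobenius_mul a (a ^ 2) a
    rw [e4, e2, e3, h4, LinearMap.range_zero, finrank_bot] at this
    exact this
  have hF3 : r + r ≤ n + t := by
    have := aux_frobenius_mul a 1 a
    rw [mul_one, one_mul, e1, Module.End.one_eq_id, LinearMap.range_id] at this
    rw [finrank_top] at this
    exact this
  have hrn : r + finrank K (ker a) = n := LinearMap.finrank_range_add_finrank_ker a
  have hle : range (a ^ 3) ≤ ker a := by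
    intro x hx
    obtain ⟨y, rfl⟩ := hx
    have : (a ^ 4) y = 0 := by rw [h4]; rfl
    simpa [pow_succ, Module.End.mul_apply] using this
  have h5 : r3 ≤ finrank K (ker a) := Submodule.finrank_mono hle
  exact ⟨r - t, by omega⟩

lemma aux_sqrt (b : Module.End K V) (hb : b * b = 0)
    (hcond : Even (finrank K (range b)) ∨ 2 * finrank K (range b) < finrank K V) :
    ∃ g : Module.End K V, g * g = b := by
  classical
  set n := finrank K V with hn
  set t := finrank K (range b) with htdef
  have hRK : range b ≤ ker b := by
    rintro x ⟨y, rfl⟩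
    have : (b * b) y = 0 := by rw [hb]; rfl
    simpa [LinearMap.mem_ker, Module.End.mul_apply] using this
  have hrn : t + finrank K (ker b) = n := LinearMap.finrank_range_add_finrank_ker b
  have h2t : 2 * t ≤ n := by
    have := Submodule.finrank_mono hRK; omega
  set s := n - 2 * t with hsdef
  obtain ⟨W, hW⟩ := Submodule.exists_isCompl ((range b).comap (ker b).subtype)
  have hfr' : finrank K ((range b).comap (ker b).subtype) = t :=
    (Submodule.comapSubtypeEquivOfLe hRK).finrank_eq
  have hfW : finrank K W = s := by
    have h := Submodule.finrank_add_eq_of_isCompl hW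
    rw [hfr'] at h
    omega
  let bR : Basis (Fin t) K (range b) := Module.finBasisOfFinrankEq K _ htdef.symm
  let bW : Basis (Fin s) K W := Module.finBasisOfFinrankEq K _ hfW
  have hbu : ∀ i : Fin t, ∃ uu : V, b uu = (bR i : V) := fun i => (bR i).2
  choose u hu using hbu
  let e : Fin t ⊕ Fin t ⊕ Fin s → V := fun x =>
    Sum.casesOn x (fun i => u i) (fun y =>
      Sum.casesOn y (fun i => ((bR i : V)))
        (fun j => (((bW j : W) : ↥(ker b)) : V)))
  have heK : ∀ i, e (.inr (.inl i)) ∈ ker b := fun i => hRK (bR i).2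
  have heKw : ∀ j, e (.inr (.inr j)) ∈ ker b := fun j => ((bW j : W) : ↥(ker b)).2
  have hspanR : range b = span K (Set.range fun i : Fin t => (bR i : V)) := by
    have h1 := congrArg (Submodule.map (range b).subtype) bR.span_eq
    rw [Submodule.map_span, Submodule.map_top, Submodule.range_subtype, ← Set.range_comp] at h1
    exact h1.symm
  have hspanW : W.map (ker b).subtype =
      span K (Set.range fun j : Fin s => (((bW j : W) : ↥(ker b)) : V)) := by
    have h1 := congrArg (Submodule.map (ker b).subtype)
      (congrArg (Submodule.map W.subtype) bW.span_eq)
    rw [Submodule.map_span, Submodule.map_span, Submodule.map_top, Submodule.range_subtype,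
      ← Set.range_comp, ← Set.range_comp] at h1
    exact h1.symm
  have hRS : range b ≤ span K (Set.range e) := by
    rw [hspanR]; apply Submodule.span_mono; rintro x ⟨i, rfl⟩; exact ⟨.inr (.inl i), rfl⟩
  have hWS : W.map (ker b).subtype ≤ span K (Set.range e) := by
    rw [hspanW]; apply Submodule.span_mono; rintro x ⟨j, rfl⟩; exact ⟨.inr (.inr j), rfl⟩
  have hKS : ker b ≤ span K (Set.range e) := by
    have hsup : (ker b : Submodule K V) =
        Submodule.map (ker b).subtype ((range b).comap (ker b).subtype) ⊔
          W.map (ker b).subtype := by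
      rw [← Submodule.map_sup, hW.sup_eq_top, Submodule.map_top, Submodule.range_subtype]
    rw [hsup]
    apply sup_le
    · rw [Submodule.map_comap_subtype]
      exact le_trans inf_le_right hRS
    · exact hWS
  have hspan : ⊤ ≤ span K (Set.range e) := by
    intro v _
    set c : Fin t → K := fun i => bR.repr ⟨b v, LinearMap.mem_range_self b v⟩ i with hc
    have hrepr : (⟨b v, LinearMap.mem_range_self b v⟩ : range b) = ∑ i, c i • bR i :=
      (bR.sum_repr _).symm
    have hbv : b v = ∑ i, c i • (bR i : V) := by
      have h2 := congrArg (Submodule.subtype (range b)) hrepr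
      simpa [map_sum] using h2
    have hbw : b (∑ i, c i • u i) = b v := by
      rw [map_sum]; simp_rw [_root_.map_smul, hu]; exact hbv.symm
    have hsplit : v = (v - ∑ i, c i • u i) + ∑ i, c i • u i := by abel
    rw [hsplit]
    apply Submodule.add_mem
    · apply hKS; simp [LinearMap.mem_ker, map_sub, hbw]
    · apply Submodule.sum_mem; intro i _
      exact Submodule.smul_mem _ _ (Submodule.subset_span ⟨.inl i, rfl⟩)
  have hcard : Fintype.card (Fin t ⊕ Fin t ⊕ Fin s) = n := by
    simp only [Fintype.card_sum, Fintype.card_fin]; omega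
  let eb : Basis (Fin t ⊕ Fin t ⊕ Fin s) K V := basisOfTopLeSpanOfCardEqFinrank e hspan hcard
  have heb : ∀ x, eb x = e x := fun x => by
    rw [coe_basisOfTopLeSpanOfCardEqFinrank]
  have hbe1 : ∀ i, b (eb (.inl i)) = eb (.inr (.inl i)) := fun i => by
    rw [heb, heb]; exact hu i
  have hbe2 : ∀ i, b (eb (.inr (.inl i))) = 0 := fun i => by
    rw [heb]; exact LinearMap.mem_ker.mp (heK i)
  have hbe3 : ∀ j, b (eb (.inr (.inr j))) = 0 := fun j => by
    rw [heb]; exact LinearMap.mem_ker.mp (heKw j)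
  by_cases ht2 : Even t
  · -- t even
    obtain ⟨m, hm⟩ := ht2
    let f : Fin t ⊕ Fin t ⊕ Fin s → V := fun x =>
      Sum.casesOn x
        (fun i => if h : (i : ℕ) % 2 = 0 then
            eb (.inl ⟨(i : ℕ) + 1, by have := i.isLt; omega⟩)
          else eb (.inr (.inl ⟨(i : ℕ) - 1, by have := i.isLt; omega⟩)))
        (fun y => Sum.casesOn y
          (fun i => if h : (i : ℕ) % 2 = 0 then
              eb (.inr (.inl ⟨(i : ℕ) + 1, by have := i.isLt; omega⟩))
            else 0)
          (fun _ => 0))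
    let g := eb.constr K f
    have hg : ∀ x, g (eb x) = f x := fun x => eb.constr_basis K f x
    refine ⟨g, eb.ext fun x => ?_⟩
    rw [Module.End.mul_apply, hg]
    rcases x with i | i | j
    · by_cases h : (i : ℕ) % 2 = 0
      · have h1 : f (.inl i) = eb (.inl ⟨(i : ℕ) + 1, by have := i.isLt; omega⟩) := dif_pos h
        have h2 : f (.inl ⟨(i : ℕ) + 1, by have := i.isLt; omega⟩) =
            eb (.inr (.inl ⟨(i : ℕ) + 1 - 1, by have := i.isLt; omega⟩)) :=
          dif_neg (by simp; omega)
        have h3 : (⟨(i : ℕ) + 1 - 1, by have := i.isLt; omega⟩ : Fin t) = i :=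
          Fin.ext (by simp)
        rw [h1, hg, h2, h3, hbe1]
      · have h1 : f (.inl i) = eb (.inr (.inl ⟨(i : ℕ) - 1, by have := i.isLt; omega⟩)) :=
          dif_neg h
        have h2 : f (.inr (.inl ⟨(i : ℕ) - 1, by have := i.isLt; omega⟩)) =
            eb (.inr (.inl ⟨(i : ℕ) - 1 + 1, by have := i.isLt; omega⟩)) :=
          dif_pos (by simp; omega)
        have h3 : (⟨(i : ℕ) - 1 + 1, by have := i.isLt; omega⟩ : Fin t) = i :=
          Fin.ext (by simp; omega)
        rw [h1, hg, h2, h3, hbe1]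
    · by_cases h : (i : ℕ) % 2 = 0
      · have h1 : f (.inr (.inl i)) =
            eb (.inr (.inl ⟨(i : ℕ) + 1, by have := i.isLt; omega⟩)) := dif_pos h
        have h2 : f (.inr (.inl ⟨(i : ℕ) + 1, by have := i.isLt; omega⟩)) = 0 :=
          dif_neg (by simp; omega)
        rw [h1, hg, h2, hbe2]
      · have h1 : f (.inr (.inl i)) = 0 := dif_neg h
        rw [h1, map_zero, hbe2]
    · have h1 : f (.inr (.inr j)) = 0 := rfl
      rw [h1, map_zero, hbe3]
  · -- t odd case
    have hodd : t % 2 = 1 := Nat.not_even_iff.mp ht2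
    have hlt : 2 * t < n := by
      rcases hcond with h | h
      · exact absurd h ht2
      · exact h
    have hs1 : 1 ≤ s := by omega
    have ht1 : 1 ≤ t := by omega
    let f : Fin t ⊕ Fin t ⊕ Fin s → V := fun x =>
      Sum.casesOn x
        (fun i => if h : (i : ℕ) = t - 1 then eb (.inr (.inr ⟨0, by omega⟩))
          else if h2 : (i : ℕ) % 2 = 0 then
            eb (.inl ⟨(i : ℕ) + 1, by have := i.isLt; omega⟩)
          else eb (.inr (.inl ⟨(i : ℕ) - 1, by have := i.isLt; omega⟩)))
        (fun y => Sum.casesOn y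
          (fun i => if h : (i : ℕ) = t - 1 then 0
            else if h2 : (i : ℕ) % 2 = 0 then
              eb (.inr (.inl ⟨(i : ℕ) + 1, by have := i.isLt; omega⟩))
            else 0)
          (fun j => if h : (j : ℕ) = 0 then eb (.inr (.inl ⟨t - 1, by omega⟩)) else 0))
    let g := eb.constr K f
    have hg : ∀ x, g (eb x) = f x := fun x => eb.constr_basis K f x
    refine ⟨g, eb.ext fun x => ?_⟩
    rw [Module.End.mul_apply, hg]
    rcases x with i | i | j
    · by_cases h : (i : ℕ) = t - 1
      · have h1 : f (.inl i) = eb (.inr (.inr ⟨0, by omega⟩)) := dif_pos h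
        have h2 : f (.inr (.inr ⟨0, by omega⟩)) = eb (.inr (.inl ⟨t - 1, by omega⟩)) :=
          dif_pos rfl
        have h3 : (⟨t - 1, by omega⟩ : Fin t) = i := Fin.ext (by simp [h])
        rw [h1, hg, h2, h3, hbe1]
      · by_cases h2 : (i : ℕ) % 2 = 0
        · have h1 : f (.inl i) = eb (.inl ⟨(i : ℕ) + 1, by have := i.isLt; omega⟩) :=
            (dif_neg h).trans (dif_pos h2)
          have h4 : f (.inl ⟨(i : ℕ) + 1, by have := i.isLt; omega⟩) =
              eb (.inr (.inl ⟨(i : ℕ) + 1 - 1, by have := i.isLt; omega⟩)) :=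
            (dif_neg (by simp; omega)).trans (dif_neg (by simp; omega))
          have h3 : (⟨(i : ℕ) + 1 - 1, by have := i.isLt; omega⟩ : Fin t) = i :=
            Fin.ext (by simp)
          rw [h1, hg, h4, h3, hbe1]
        · have h1 : f (.inl i) = eb (.inr (.inl ⟨(i : ℕ) - 1, by have := i.isLt; omega⟩)) :=
            (dif_neg h).trans (dif_neg h2)
          have h4 : f (.inr (.inl ⟨(i : ℕ) - 1, by have := i.isLt; omega⟩)) =
              eb (.inr (.inl ⟨(i : ℕ) - 1 + 1, by have := i.isLt; omega⟩)) :=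
            (dif_neg (by simp; omega)).trans (dif_pos (by simp; omega))
          have h3 : (⟨(i : ℕ) - 1 + 1, by have := i.isLt; omega⟩ : Fin t) = i :=
            Fin.ext (by simp; omega)
          rw [h1, hg, h4, h3, hbe1]
    · by_cases h : (i : ℕ) = t - 1
      · have h1 : f (.inr (.inl i)) = 0 := dif_pos h
        rw [h1, map_zero, hbe2]
      · by_cases h2 : (i : ℕ) % 2 = 0
        · have h1 : f (.inr (.inl i)) =
              eb (.inr (.inl ⟨(i : ℕ) + 1, by have := i.isLt; omega⟩)) :=
            (dif_neg h).trans (dif_pos h2)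
          have h4 : f (.inr (.inl ⟨(i : ℕ) + 1, by have := i.isLt; omega⟩)) = 0 :=
            (dif_neg (by simp; omega)).trans (dif_neg (by simp; omega))
          rw [h1, hg, h4, hbe2]
        · have h1 : f (.inr (.inl i)) = 0 := (dif_neg h).trans (dif_neg h2)
          rw [h1, map_zero, hbe2]
    · by_cases h : (j : ℕ) = 0
      · have h1 : f (.inr (.inr j)) = eb (.inr (.inl ⟨t - 1, by omega⟩)) := dif_pos h
        have h4 : f (.inr (.inl ⟨t - 1, by omega⟩)) = 0 := dif_pos rfl
        rw [h1, hg, h4, hbe3]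
      · have h1 : f (.inr (.inr j)) = 0 := dif_neg h
        rw [h1, map_zero, hbe3]

lemma aux_two_rank_le (b : Module.End K V) (hb : b * b = 0) :
    2 * finrank K (range b) ≤ finrank K V := by
  have hRK : range b ≤ ker b := by
    rintro x ⟨y, rfl⟩
    have : (b * b) y = 0 := by rw [hb]; rfl
    simpa [LinearMap.mem_ker, Module.End.mul_apply] using this
  have h1 := LinearMap.finrank_range_add_finrank_ker b
  have h2 := Submodule.finrank_mono hRK
  omega

theorem sq_root_nilpotent_order_two {n : ℕ} (B₀ : Matrix (Fin n) (Fin n) ℂ)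
    (hB : B₀ ^ 2 = 0) :
    (∃ A : Matrix (Fin n) (Fin n) ℂ, A ^ 2 = B₀) ↔
      (Even B₀.rank ∨ (Odd B₀.rank ∧ 1 ≤ n - 2 * B₀.rank)) := by
  classical
  have hfin : finrank ℂ (Fin n → ℂ) = n := by
    rw [finrank_pi]; exact Fintype.card_fin n
  have hrank : B₀.rank = finrank ℂ (range B₀.mulVecLin) := rfl
  have hbb : (B₀.mulVecLin : Module.End ℂ (Fin n → ℂ)) * B₀.mulVecLin = 0 := by
    rw [Module.End.mul_eq_comp, ← Matrix.mulVecLin_mul, ← sq, hB, Matrix.mulVecLin_zero]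
  have h2t : 2 * B₀.rank ≤ n := by
    have := aux_two_rank_le B₀.mulVecLin hbb
    rw [hfin] at this
    exact this
  constructor
  · rintro ⟨A, rfl⟩
    set a : Module.End ℂ (Fin n → ℂ) := A.mulVecLin with hadef
    have hm2 : (A ^ 2).mulVecLin = a ^ 2 := by
      rw [sq, Matrix.mulVecLin_mul, sq, Module.End.mul_eq_comp]
    have hrank2 : (A ^ 2).rank = finrank ℂ (range (a ^ 2)) := by
      rw [hrank, hm2]
    have ha4 : a ^ 4 = 0 := by
      have : ((A ^ 2) ^ 2).mulVecLin = (0 : Matrix (Fin n) (Fin n) ℂ).mulVecLin := by rw [hB]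
      rw [Matrix.mulVecLin_zero, sq, Matrix.mulVecLin_mul, hm2, ← Module.End.mul_eq_comp,
        ← sq, ← pow_mul] at this
      exact this
    by_cases hev : Even (A ^ 2).rank
    · exact Or.inl hev
    · refine Or.inr ⟨Nat.odd_iff.mpr (Nat.not_even_iff.mp hev), ?_⟩
      by_contra hcon
      have hn2 : finrank ℂ (Fin n → ℂ) = 2 * finrank ℂ (range (a ^ 2)) := by
        rw [hfin, ← hrank2]; omega
      have := aux_even a ha4 hn2
      rw [← hrank2] at this
      exact hev this
  · intro hcond
    obtain ⟨g, hg⟩ := aux_sqrt B₀.mulVecLin hbb (by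
      rw [← hrank, hfin]
      rcases hcond with h | h
      · exact Or.inl h
      · exact Or.inr (by omega))
    refine ⟨LinearMap.toMatrix' g, ?_⟩
    rw [sq, ← LinearMap.toMatrix'_mul, hg]
    have : B₀.mulVecLin = Matrix.toLin' B₀ := (Matrix.toLin'_apply' B₀).symm
    rw [this, LinearMap.toMatrix'_toLin']
end

section
/- Let H = diag(ε₁, ε₂) with ε₁, ε₂ ∈ {1, -1}. A nonzero 2×2 complex matrix A is H-selfadjoint and satisfies A² = 0 if and only if ε₁ = -ε₂ and A = [[α, -β̄],[β, -α]] for some real α and complex β with |β| = |α|, β ≠ 0 or α ≠ 0. In particular, if ε₁ = ε₂ then the only H-selfadjoint square root of the 2×2 zero matrix is the zero matrix. -/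
/-!
For the sign matrix `H = diag(ε₁, ε₂)`, the relation `H A = Aᴴ H` forces the diagonal of `A` to be
real and ties the off-diagonal entries by `A₀₁ = ε₁ ε₂ · conj A₁₀`. If `ε₁ = ε₂`, then `H` is a
scalar, so `A` is Hermitian and `Aᴴ A = A² = 0` gives `A = 0`. If `ε₁ = -ε₂`, then
`A = [[α, -β̄], [β, δ]]` with `α, δ` real, and a `2 × 2` matrix squares to zero exactly when its
trace `α + δ` and determinant `|β|² - α²` vanish (determinant via `det (A²) = (det A)²`, trace via
`(tr A)² = tr (A²) + 2 det A`).
-/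

open Matrix

open ComplexConjugate

open scoped ComplexOrder

namespace Matrix

theorem of_fin_two_eq_of_fin_two_iff {α : Type*} {a b c d a' b' c' d' : α} :
    !![a, b; c, d] = !![a', b'; c', d'] ↔ a = a' ∧ b = b' ∧ c = c' ∧ d = d' := by
  simp [and_assoc]

theorem fin_two_of_eq_zero_iff {α : Type*} [Zero α] {a b c d : α} :
    !![a, b; c, d] = 0 ↔ a = 0 ∧ b = 0 ∧ c = 0 ∧ d = 0 := by
  simp [← Matrix.ext_iff, Fin.forall_fin_two, and_assoc]

theorem conjTranspose_fin_two_of {α : Type*} [Star α] (a b c d : α) :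
    !![a, b; c, d]ᴴ = !![star a, star c; star b, star d] := by
  ext i j; fin_cases i <;> fin_cases j <;> rfl

theorem sq_eq_zero_iff_trace_eq_zero_and_det_eq_zero {R : Type*} [CommRing R] [IsReduced R]
    (A : Matrix (Fin 2) (Fin 2) R) : A ^ 2 = 0 ↔ A.trace = 0 ∧ A.det = 0 := by
  constructor
  · intro hA
    have hdet : A.det = 0 := eq_zero_of_pow_eq_zero (n := 2) (by rw [← det_pow, hA, det_zero])
    refine ⟨?_, hdet⟩
    rw [eta_fin_two A, sq, mul_fin_two, fin_two_of_eq_zero_iff] at hA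
    rw [det_fin_two] at hdet
    obtain ⟨h₀₀, -, -, h₁₁⟩ := hA
    rw [trace_fin_two]
    exact eq_zero_of_pow_eq_zero (n := 2) (by linear_combination h₀₀ + h₁₁ + 2 * hdet)
  · rw [eta_fin_two A, sq, mul_fin_two, trace_fin_two_of, det_fin_two_of, fin_two_of_eq_zero_iff]
    rintro ⟨htr, hdet⟩
    exact ⟨by linear_combination A 0 0 * htr - hdet, by linear_combination A 0 1 * htr,
      by linear_combination A 1 0 * htr, by linear_combination A 1 1 * htr - hdet⟩

theorem smul_one_fin_two {R : Type*} [Semiring R] (c : R) :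
    c • (1 : Matrix (Fin 2) (Fin 2) R) = !![c, 0; 0, c] := by
  rw [smul_one_eq_diagonal, diagonal_fin_two]

theorem IsHermitian.eq_zero_of_sq_eq_zero {n R : Type*} [Fintype n] [DecidableEq n]
    [PartialOrder R] [Ring R] [StarRing R] [StarOrderedRing R] [NoZeroDivisors R] {A : Matrix n n R} (hA : A.IsHermitian)
    (hsq : A ^ 2 = 0) : A = 0 := by
  rwa [← conjTranspose_mul_self_eq_zero, hA, ← sq]

theorem isHermitian_of_smul_one_mul_eq_conjTranspose_mul {n K : Type*} [Fintype n]
    [DecidableEq n] [Field K] [StarRing K] {c : K} (hc : c ≠ 0) {A : Matrix n n K}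
    (h : (c • 1 : Matrix n n K) * A = Aᴴ * (c • 1)) : A.IsHermitian := by
  rw [smul_mul_assoc, one_mul, mul_smul_comm, mul_one] at h
  exact ((smul_right_injective _ hc).eq_iff.mp h).symm

theorem diag_neg_mul_eq_conjTranspose_mul_iff {ε : ℝ} (hε : ε ≠ 0)
    {A : Matrix (Fin 2) (Fin 2) ℂ} :
    !![(ε : ℂ), 0; 0, -ε] * A = Aᴴ * !![(ε : ℂ), 0; 0, -ε] ↔
      ∃ (α δ : ℝ) (β : ℂ), A = !![(α : ℂ), -conj β; β, δ] := by
  have hε' : (ε : ℂ) ≠ 0 := by exact_mod_cast hε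
  obtain ⟨a, b, c, d, rfl⟩ : ∃ a b c d, A = !![a, b; c, d] := ⟨_, _, _, _, eta_fin_two A⟩
  simp only [conjTranspose_fin_two_of, mul_fin_two, of_fin_two_eq_of_fin_two_iff, zero_mul, mul_zero, add_zero, zero_add, Complex.star_def]
  constructor
  · rintro ⟨h₀₀, h₀₁, -, h₁₁⟩
    have ha : conj a = a := mul_left_cancel₀ hε' (by linear_combination -h₀₀)
    have hd : conj d = d := mul_left_cancel₀ hε' (by linear_combination h₁₁)
    exact ⟨a.re, d.re, c, (Complex.conj_eq_iff_re.mp ha).symm,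
      mul_left_cancel₀ hε' (by linear_combination h₀₁), rfl, (Complex.conj_eq_iff_re.mp hd).symm⟩
  · rintro ⟨α, δ, β, rfl, rfl, rfl, rfl⟩
    simp only [Complex.conj_ofReal, map_neg, Complex.conj_conj]
    refine ⟨?_, ?_, ?_, ?_⟩ <;> ring

theorem diag_neg_mul_eq_conjTranspose_mul_and_sq_eq_zero_iff {ε : ℝ} (hε : ε ≠ 0)
    {A : Matrix (Fin 2) (Fin 2) ℂ} :
    (!![(ε : ℂ), 0; 0, -ε] * A = Aᴴ * !![(ε : ℂ), 0; 0, -ε] ∧ A ^ 2 = 0) ↔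
      ∃ (α : ℝ) (β : ℂ), ‖β‖ = |α| ∧ A = !![(α : ℂ), -conj β; β, -α] := by
  rw [diag_neg_mul_eq_conjTranspose_mul_iff hε]
  constructor
  · rintro ⟨⟨α, δ, β, rfl⟩, hsq⟩
    rw [sq_eq_zero_iff_trace_eq_zero_and_det_eq_zero, trace_fin_two_of, det_fin_two_of,
      neg_mul, sub_neg_eq_add, Complex.conj_mul'] at hsq
    obtain ⟨htr, hdet⟩ := hsq
    obtain rfl : δ = -α := by exact_mod_cast eq_neg_of_add_eq_zero_right htr
    push_cast at hdet
    refine ⟨α, β, ?_, by push_cast; rfl⟩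
    rw [← abs_norm, ← sq_eq_sq_iff_abs_eq_abs]
    exact_mod_cast (by linear_combination hdet : (‖β‖ : ℂ) ^ 2 = α ^ 2)
  · rintro ⟨α, β, hβ, rfl⟩
    refine ⟨⟨α, -α, β, by push_cast; rfl⟩, ?_⟩
    rw [sq_eq_zero_iff_trace_eq_zero_and_det_eq_zero, trace_fin_two_of, det_fin_two_of,
      neg_mul, sub_neg_eq_add, Complex.conj_mul', hβ, ← Complex.ofReal_pow, sq_abs]
    push_cast
    constructor <;> ring

end Matrix

theorem H_selfadjoint_sq_roots_of_zero_2x2 (ε₁ ε₂ : ℝ)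
    (h₁ : ε₁ = 1 ∨ ε₁ = -1) (h₂ : ε₂ = 1 ∨ ε₂ = -1) :
    (∀ A : Matrix (Fin 2) (Fin 2) ℂ, A ≠ 0 →
      (((!![(ε₁ : ℂ), 0; 0, (ε₂ : ℂ)]) * A = Aᴴ * !![(ε₁ : ℂ), 0; 0, (ε₂ : ℂ)] ∧ A ^ 2 = 0) ↔
        (ε₁ = -ε₂ ∧ ∃ (α : ℝ) (β : ℂ), ‖β‖ = |α| ∧ (β ≠ 0 ∨ α ≠ 0) ∧
          A = !![(α : ℂ), -(starRingEnd ℂ) β; β, -(α : ℂ)]))) ∧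
    (ε₁ = ε₂ → ∀ A : Matrix (Fin 2) (Fin 2) ℂ,
      (!![(ε₁ : ℂ), 0; 0, (ε₂ : ℂ)]) * A = Aᴴ * !![(ε₁ : ℂ), 0; 0, (ε₂ : ℂ)] →
      A ^ 2 = 0 → A = 0) := by
  have hε₁ : ε₁ ≠ 0 := by rcases h₁ with rfl | rfl <;> norm_num
  have same_sign : ε₁ = ε₂ → ∀ A : Matrix (Fin 2) (Fin 2) ℂ,
      !![(ε₁ : ℂ), 0; 0, (ε₂ : ℂ)] * A = Aᴴ * !![(ε₁ : ℂ), 0; 0, (ε₂ : ℂ)] → A ^ 2 = 0 → A = 0 := by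
    rintro rfl A hH hsq
    rw [← smul_one_fin_two] at hH
    exact (isHermitian_of_smul_one_mul_eq_conjTranspose_mul (by exact_mod_cast hε₁) hH
      ).eq_zero_of_sq_eq_zero hsq
  refine ⟨fun A hA => ?_, same_sign⟩
  obtain heq | hopp : ε₁ = ε₂ ∨ ε₁ = -ε₂ := by
    rcases h₁ with rfl | rfl <;> rcases h₂ with rfl | rfl <;> norm_num
  · refine ⟨fun ⟨hH, hsq⟩ => absurd (same_sign heq A hH hsq) hA, fun ⟨hopp, _⟩ => ?_⟩
    exact absurd (by linarith : ε₁ = 0) hε₁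
  · obtain rfl : ε₂ = -ε₁ := by linarith
    rw [Complex.ofReal_neg, diag_neg_mul_eq_conjTranspose_mul_and_sq_eq_zero_iff hε₁]
    simp only [neg_neg, true_and]
    refine exists₂_congr fun α β => and_congr_right fun _ => ⟨fun hAαβ => ⟨?_, hAαβ⟩, And.right⟩
    by_contra! h
    obtain ⟨rfl, rfl⟩ := h
    exact hA (by simp [hAαβ, fin_two_of_eq_zero_iff])
end

section
/- Let H = Q₂ ⊕ [1] be the 3×3 matrix [[0,1,0],[1,0,0],[0,0,1]], and let B = J₂(0) ⊕ J₁(0) (1 in entry (1,2), zeros elsewhere). A 3×3 complex matrix A satisfies A² = B and H·A = Aᴴ·H if and only if A = [[0, α, β],[0,0,0],[0, β̄, 0]] for some real α and complex β with |β| = 1. -/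
/-!
Squaring gives `A ^ 4 = B ^ 2 = 0`, so the nilpotent `3 × 3` matrix `A` satisfies `A ^ 3 = 0`, i.e.
`B * A = A * B = 0`. This kills the second row and the first column of `A`, and for the remaining
four entries `a b c d` both conditions become scalar equations: `A ^ 2 = B` says `b c = 1` and
`d = 0`, while `H`-selfadjointness says `a` is real and `c = b̄`.
-/

open Matrix Polynomial

theorem Matrix.pow_card_eq_zero_of_isNilpotent {n R : Type*} [Fintype n] [DecidableEq n]
    [CommRing R] [IsDomain R] {M : Matrix n n R} (hM : IsNilpotent M) :
    M ^ Fintype.card n = 0 := by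
  have hchar : M.charpoly = X ^ Fintype.card n :=
    sub_eq_zero.mp (isNilpotent_charpoly_sub_pow_of_isNilpotent hM).eq_zero
  simpa [hchar] using aeval_self_charpoly M

theorem Matrix.eq_zero_row_one_col_zero_of_mul_eq_zero {R : Type*} [Semiring R]
    {A : Matrix (Fin 3) (Fin 3) R} (hBA : !![0, 1, 0; 0, 0, 0; 0, 0, 0] * A = 0)
    (hAB : A * !![0, 1, 0; 0, 0, 0; 0, 0, 0] = 0) :
    A = !![0, A 0 1, A 0 2; 0, 0, 0; 0, A 2 1, A 2 2] := by
  rw [← Matrix.ext_iff] at hBA hAB ⊢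
  simp_all [Matrix.mul_apply, Fin.sum_univ_succ, Fin.forall_fin_succ]

theorem Matrix.sq_of_zero_row_one_col_zero {R : Type*} [Semiring R] (a b c d : R) :
    !![0, a, b; 0, 0, 0; 0, c, d] ^ 2 = !![0, b * c, b * d; 0, 0, 0; 0, d * c, d * d] := by
  ext i j
  fin_cases i <;> fin_cases j <;> simp [sq, Matrix.mul_apply, Fin.sum_univ_succ]

theorem Matrix.selfAdjoint_of_zero_row_one_col_zero_iff {R : Type*} [Semiring R] [StarRing R]
    (a b c d : R) :
    !![0, 1, 0; 1, 0, 0; 0, 0, 1] * !![0, a, b; 0, 0, 0; 0, c, d]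
      = (!![0, a, b; 0, 0, 0; 0, c, d])ᴴ * !![0, 1, 0; 1, 0, 0; 0, 0, 1] ↔
      star a = a ∧ star b = c ∧ star d = d := by
  rw [← Matrix.ext_iff]
  simp [Fin.forall_fin_succ, Matrix.mul_apply, Fin.sum_univ_succ, eq_comm (a := a), eq_comm (a := b),
    eq_comm (a := c), eq_comm (a := d), star_eq_iff_star_eq (r := c), and_assoc]

theorem Complex.mul_conj_eq_one_iff {z : ℂ} : z * (starRingEnd ℂ) z = 1 ↔ ‖z‖ = 1 := by
  rw [Complex.mul_conj', ← Complex.ofReal_pow, Complex.ofReal_eq_one,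
    pow_eq_one_iff_of_nonneg (norm_nonneg z) two_ne_zero]

theorem H_selfadjoint_sq_roots_J2_plus_J1 (A : Matrix (Fin 3) (Fin 3) ℂ) :
    (A ^ 2 = !![0, 1, 0; 0, 0, 0; 0, 0, 0] ∧
      (!![0, 1, 0; 1, 0, 0; 0, 0, 1] : Matrix (Fin 3) (Fin 3) ℂ) * A
        = Aᴴ * !![0, 1, 0; 1, 0, 0; 0, 0, 1]) ↔
      ∃ (α : ℝ) (β : ℂ), ‖β‖ = 1 ∧
        A = !![0, (α : ℂ), β; 0, 0, 0; 0, (starRingEnd ℂ) β, 0] := by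
  constructor
  · rintro ⟨hsq, hH⟩
    have hA3 : A ^ 3 = 0 := by
      refine pow_eq_zero_of_le (by simp) (pow_card_eq_zero_of_isNilpotent ⟨4, ?_⟩)
      rw [show 4 = 2 * 2 by rfl, pow_mul, hsq]
      ext i j
      fin_cases i <;> fin_cases j <;> simp [sq, Matrix.mul_apply, Fin.sum_univ_succ]
    obtain ⟨a, b, c, d, rfl⟩ : ∃ a b c d : ℂ, A = !![0, a, b; 0, 0, 0; 0, c, d] :=
      ⟨_, _, _, _, eq_zero_row_one_col_zero_of_mul_eq_zero (by rwa [← hsq, ← pow_succ])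
        (by rwa [← hsq, ← pow_succ'])⟩
    rw [sq_of_zero_row_one_col_zero, ← Matrix.ext_iff] at hsq
    obtain ⟨ha, rfl, -⟩ := (selfAdjoint_of_zero_row_one_col_zero_iff a b c d).mp hH
    have hbc : b * star b = 1 := by simpa using hsq 0 1
    have hd : d = 0 := mul_self_eq_zero.mp (by simpa using hsq 2 2)
    refine ⟨a.re, b, Complex.mul_conj_eq_one_iff.mp hbc, ?_⟩
    rw [hd, Complex.conj_eq_iff_re.mp ha]
    rfl
  · rintro ⟨α, β, hβ, rfl⟩
    refine ⟨?_, (selfAdjoint_of_zero_row_one_col_zero_iff _ _ _ _).mpr ⟨by simp, rfl, by simp⟩⟩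
    rw [sq_of_zero_row_one_col_zero, Complex.mul_conj_eq_one_iff.mpr hβ]
    simp
end

section
/- Let H = Q₂ ⊕ [-1] be the 3×3 matrix [[0,1,0],[1,0,0],[0,0,-1]], and let B = J₂(0) ⊕ J₁(0) (1 in entry (1,2), zeros elsewhere). Then B has no H-selfadjoint square root: there is no 3×3 complex matrix A with A² = B and H·A = Aᴴ·H. -/
open Matrix

theorem no_H_selfadjoint_sq_root_J2_plus_J1_negative_sign :
    ¬ ∃ A : Matrix (Fin 3) (Fin 3) ℂ,
        A ^ 2 = !![0, 1, 0; 0, 0, 0; 0, 0, 0] ∧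
        (!![0, 1, 0; 1, 0, 0; 0, 0, -1] : Matrix (Fin 3) (Fin 3) ℂ) * A
          = Aᴴ * !![0, 1, 0; 1, 0, 0; 0, 0, -1] := by
  rintro ⟨A, h2, hH⟩
  have hc : A * A ^ 2 = A ^ 2 * A := by rw [pow_two, mul_assoc]
  rw [h2] at hc
  have e00 := congrFun (congrFun hc 0) 0
  have e01 := congrFun (congrFun hc 0) 1
  have e02 := congrFun (congrFun hc 0) 2
  simp [Matrix.mul_apply, Fin.sum_univ_three, Matrix.vecHead, Matrix.vecTail] at e00 e01 e02
  have f12 := congrFun (congrFun hH 1) 2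
  simp [Matrix.mul_apply, Fin.sum_univ_three, Matrix.conjTranspose_apply] at f12
  have g11 := congrFun (congrFun h2 1) 1
  have g01 := congrFun (congrFun h2 0) 1
  simp [pow_two, Matrix.mul_apply, Fin.sum_univ_three] at g11 g01
  have h11 : A 1 1 = 0 := by
    have : A 1 1 * A 1 1 = 0 := by rw [← e00, ← e02] at g11; linear_combination g11
    exact pow_eq_zero_iff (n := 2) (by norm_num) |>.mp (by rw [pow_two]; exact this)
  have h00 : A 0 0 = 0 := e01.trans h11
  have key : A 0 2 * A 2 1 = 1 := by
    rw [h00, h11] at g01; linear_combination g01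
  rw [f12] at key
  have := congrArg Complex.re key
  simp [Complex.mul_re, Complex.conj_re, Complex.conj_im] at this
  nlinarith [this, sq_nonneg ((A 2 1).re), sq_nonneg ((A 2 1).im)]
end

section
/- Let H be an invertible Hermitian n×n complex matrix and let B be H-nonnegative, i.e. ⟨H B x, x⟩ ≥ 0 for all x ∈ ℂⁿ (equivalently HB is positive semidefinite and B is H-selfadjoint). If B has an H-nonnegative square root A (A² = B, ⟨H A x, x⟩ ≥ 0 for all x), then B is diagonalizable and all eigenvalues of B are nonnegative reals. -/
/-!
Write `H * A = Cᴴ * C`. Then `A = T * N` with `T = H⁻¹ * Cᴴ` and `N = C`, and the reversed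
product `K = N * T = C * H⁻¹ * Cᴴ` is Hermitian. Since `(T * N) ^ (k + 1) = T * (N * T) ^ k * N`,
evaluating `X * q` at `B = A ^ 2` gives `T * K * q (K ^ 2) * N`. If `q` vanishes at the nonzero
squares of the real eigenvalues of `K`, the odd polynomial `X * q (X ^ 2)` kills `K`, so `B` is
annihilated by the squarefree polynomial `X * q` whose roots are nonnegative reals.
-/

open Polynomial Matrix Module
open scoped ComplexOrder

namespace Polynomial

variable {R A : Type*} [CommSemiring R] [Semiring A] [Algebra R A]

lemma aeval_mul_X_mul (a b : A) (p : R[X]) :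
    aeval (a * b) (X * p) = a * aeval (b * a) p * b := by
  induction p using Polynomial.induction_on' with
  | add p q hp hq => simp only [mul_add, map_add, hp, hq, add_mul]
  | monomial k c =>
    have hpow : a * (b * a) ^ k = (a * b) ^ k * a :=
      (SemiconjBy.pow_right (mul_assoc a b a).symm k :)
    simp only [X_mul_monomial, aeval_monomial, ← Algebra.smul_def, mul_smul_comm, smul_mul_assoc]
    rw [hpow, pow_succ, mul_assoc]

lemma aeval_mul_sq_X_mul (a b : A) (q : R[X]) :
    aeval ((a * b) ^ 2) (X * q) = a * aeval (b * a) (X * q.comp (X ^ 2)) * b := by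
  have hcomp : (X * q).comp (X ^ 2) = X * (X * q.comp (X ^ 2)) := by
    rw [mul_comp, X_comp]; ring
  rw [← aeval_mul_X_mul, ← hcomp, aeval_comp, map_pow, aeval_X]

end Polynomial

lemma aeval_eq_zero_of_eval_eq_zero_on_spectrum {R A : Type*} {p : A → Prop} [CommSemiring R]
    [StarRing R] [MetricSpace R] [IsTopologicalSemiring R] [ContinuousStar R] [TopologicalSpace A]
    [Ring A] [StarRing A] [Algebra R A] [ContinuousFunctionalCalculus R A p] {a : A}
    (ha : p a) {q : R[X]} (hq : ∀ x ∈ spectrum R a, q.eval x = 0) : aeval a q = 0 := by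
  rw [← cfc_polynomial q a ha, ← cfc_zero R a]
  exact cfc_congr hq

lemma spectrum.isRoot_of_aeval_eq_zero {𝕜 A : Type*} [Field 𝕜] [Ring A] [Algebra 𝕜 A] {a : A}
    {p : 𝕜[X]} (hp : aeval a p = 0) {z : 𝕜} (hz : z ∈ spectrum 𝕜 a) : p.IsRoot z := by
  rcases subsingleton_or_nontrivial A with _ | _
  · simp [spectrum.of_subsingleton] at hz
  · have := spectrum.subset_polynomial_aeval a p ⟨z, hz, rfl⟩
    rwa [hp, spectrum.zero_eq, Set.mem_singleton_iff] at this

lemma Module.End.exists_basis_apply_eq_smul_of_iSup_eigenspace_eq_top {K V ι : Type*} [Field K]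
    [AddCommGroup V] [Module K V] [FiniteDimensional K V] [Fintype ι]
    (hι : finrank K V = Fintype.card ι) {f : End K V} (hf : ⨆ μ, f.eigenspace μ = ⊤) :
    ∃ (b : Basis ι K V) (d : ι → K), ∀ i, f (b i) = d i • b i := by
  classical
  have hint : DirectSum.IsInternal f.eigenspace :=
    (DirectSum.isInternal_submodule_iff_iSupIndep_and_iSup_eq_top _).2
      ⟨f.eigenspaces_iSupIndep, hf⟩
  let b := hint.collectedBasis fun μ ↦ finBasis K (f.eigenspace μ)
  let e := b.indexEquiv ((finBasisOfFinrankEq K V hι).reindex (Fintype.equivFin ι).symm)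
  refine ⟨b.reindex e, fun i ↦ (e.symm i).1, fun i ↦ ?_⟩
  rw [Basis.reindex_apply]
  exact mem_eigenspace_iff.mp (hint.collectedBasis_mem _ (e.symm i))

namespace Matrix

variable {n : Type*} [Fintype n] [DecidableEq n]

section Field

variable {K : Type*} [Field K]

lemma exists_isUnit_eq_mul_diagonal_mul_inv_of_basis {B : Matrix n n K} (b : Basis n K (n → K))
    (d : n → K) (hb : ∀ i, B *ᵥ b i = d i • b i) :
    ∃ S : Matrix n n K, IsUnit S ∧ B = S * diagonal d * S⁻¹ := by
  set S := (Pi.basisFun K n).toMatrix b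
  have hS : IsUnit S.det :=
    isUnit_det_of_right_inverse ((Pi.basisFun K n).toMatrix_mul_toMatrix_flip b)
  have hBS : B * S = S * diagonal d := by
    ext i j
    rw [mul_diagonal]
    simpa [S, Basis.toMatrix_apply, mul_apply, mulVec, dotProduct, mul_comm]
      using congr_fun (hb j) i
  refine ⟨S, (isUnit_iff_isUnit_det S).2 hS, ?_⟩
  rw [← hBS, mul_nonsing_inv_cancel_right _ _ hS]

lemma exists_isUnit_eq_mul_diagonal_mul_inv_of_squarefree [IsAlgClosed K] {B : Matrix n n K}
    {p : K[X]} (hp : Squarefree p) (hB : aeval B p = 0) :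
    ∃ (S : Matrix n n K) (d : n → K), IsUnit S ∧ B = S * diagonal d * S⁻¹ := by
  have hf : aeval (toLinAlgEquiv' B) p = 0 := by
    rw [aeval_algEquiv]; simp [hB]
  have hss : End.IsSemisimple (toLinAlgEquiv' B) :=
    End.isSemisimple_of_squarefree_aeval_eq_zero hp hf
  obtain ⟨b, d, hb⟩ := End.exists_basis_apply_eq_smul_of_iSup_eigenspace_eq_top
    (finrank_fintype_fun_eq_card K) hss.iSup_eigenspace_eq_top
  obtain ⟨S, hS, hBS⟩ := exists_isUnit_eq_mul_diagonal_mul_inv_of_basis (B := B) b d hb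
  exact ⟨S, d, hS, hBS⟩

end Field

section RCLike

variable {𝕜 : Type*} [RCLike 𝕜]

lemma IsHermitian.aeval_X_mul_comp_X_sq_eq_zero {K : Matrix n n 𝕜} (hK : K.IsHermitian)
    {q : ℝ[X]} (hq : ∀ i, hK.eigenvalues i ≠ 0 → q.eval (hK.eigenvalues i ^ 2) = 0) :
    aeval K (X * q.comp (X ^ 2)) = 0 := by
  refine aeval_eq_zero_of_eval_eq_zero_on_spectrum hK.isSelfAdjoint ?_
  rw [hK.spectrum_real_eq_range_eigenvalues]
  rintro _ ⟨i, rfl⟩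
  by_cases h : hK.eigenvalues i = 0
  · simp [h]
  · simp [eval_comp, hq i h]

open scoped MatrixOrder in
lemma exists_eq_mul_and_isHermitian_mul_swap {H A : Matrix n n 𝕜} (hH : H.IsHermitian)
    (hHinv : IsUnit H) (hHA : (H * A).PosSemidef) :
    ∃ T N : Matrix n n 𝕜, A = T * N ∧ (N * T).IsHermitian := by
  obtain ⟨C, hC⟩ := CStarAlgebra.nonneg_iff_eq_star_mul_self.mp hHA.nonneg
  refine ⟨H⁻¹ * star C, C, ?_, ?_⟩
  · rw [mul_assoc, ← hC, ← mul_assoc, nonsing_inv_mul _ ((isUnit_iff_isUnit_det H).mp hHinv),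
      one_mul]
  · rw [← mul_assoc]
    exact isHermitian_mul_mul_conjTranspose C hH.inv

end RCLike

end Matrix

theorem H_nonnegative_sq_root_implies_diagonalizable_general {n : ℕ}
    (H B : Matrix (Fin n) (Fin n) ℂ)
    (hH : H.IsHermitian) (hHinv : IsUnit H)
    (hA : ∃ A : Matrix (Fin n) (Fin n) ℂ, A ^ 2 = B ∧ (H * A).PosSemidef) :
    (∃ (S : Matrix (Fin n) (Fin n) ℂ) (d : Fin n → ℂ),
        IsUnit S ∧ B = S * Matrix.diagonal d * S⁻¹) ∧
      ∀ z ∈ spectrum ℂ B, ∃ r : ℝ, 0 ≤ r ∧ z = (r : ℂ) := by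
  obtain ⟨A, rfl, hHA⟩ := hA
  obtain ⟨T, N, rfl, hK⟩ := exists_eq_mul_and_isHermitian_mul_swap hH hHinv hHA
  set s := (Finset.univ.image fun i ↦ hK.eigenvalues i ^ 2).erase 0
  set p : ℂ[X] := ∏ μ ∈ insert 0 s, (X - C (μ : ℂ))
  have hp : p = (X * ∏ μ ∈ s, (X - C μ)).map (algebraMap ℝ ℂ) := by
    have h0 : (0 : ℝ) ∉ s := Finset.notMem_erase 0 _
    simp [p, Finset.prod_insert h0, Polynomial.map_prod]
  have hann : aeval ((T * N) ^ 2) p = 0 := by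
    rw [hp, aeval_map_algebraMap, aeval_mul_sq_X_mul, hK.aeval_X_mul_comp_X_sq_eq_zero, mul_zero,
      zero_mul]
    intro i hi
    rw [eval_prod]
    exact Finset.prod_eq_zero (Finset.mem_erase.2 ⟨pow_ne_zero 2 hi, Finset.mem_image_of_mem _
      (Finset.mem_univ i)⟩) (by simp)
  have hsep : p.Separable :=
    separable_prod_X_sub_C_iff'.2 fun x _ y _ h ↦ Complex.ofReal_injective h
  refine ⟨exists_isUnit_eq_mul_diagonal_mul_inv_of_squarefree hsep.squarefree hann, fun z hz ↦ ?_⟩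
  obtain ⟨μ, hμ, rfl⟩ : ∃ μ ∈ insert 0 s, z = μ := by
    simpa [p, eval_prod, Finset.prod_eq_zero_iff, sub_eq_zero] using
      spectrum.isRoot_of_aeval_eq_zero hann hz
  refine ⟨μ, ?_, rfl⟩
  rcases Finset.mem_insert.1 hμ with rfl | hμ
  · rfl
  · obtain ⟨i, -, rfl⟩ := Finset.mem_image.1 (Finset.mem_of_mem_erase hμ)
    positivity

theorem H_nonnegative_sq_root_implies_diagonalizable {n : ℕ}
    (H B : Matrix (Fin n) (Fin n) ℂ)
    (hH : H.IsHermitian) (hHinv : IsUnit H)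
    (hB : (H * B).PosSemidef)
    (hA : ∃ A : Matrix (Fin n) (Fin n) ℂ, A ^ 2 = B ∧ (H * A).PosSemidef) :
    (∃ (S : Matrix (Fin n) (Fin n) ℂ) (d : Fin n → ℂ),
        IsUnit S ∧ B = S * Matrix.diagonal d * S⁻¹) ∧
      ∀ z ∈ spectrum ℂ B, ∃ r : ℝ, 0 ≤ r ∧ z = (r : ℂ) :=
  H_nonnegative_sq_root_implies_diagonalizable_general H B hH hHinv hA
end

section
/- If H is Hermitian invertible and B is H-nonnegative, then every eigenvalue of B is real. -/
open Matrix
open scoped ComplexOrder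

namespace Matrix

variable {n 𝕜 : Type*} [Fintype n] [DecidableEq n]

theorem exists_mulVec_eq_smul_of_mem_spectrum {K : Type*} [Field K] {B : Matrix n n K} {z : K}
    (hz : z ∈ spectrum K B) : ∃ v ≠ 0, B *ᵥ v = z • v := by
  rw [← spectrum_toLin'] at hz
  obtain ⟨v, hv, hv0⟩ := (Module.End.HasEigenvalue.of_mem_spectrum hz).exists_hasEigenvector
  exact ⟨v, hv0, by simpa using Module.End.mem_eigenspace_iff.mp hv⟩

variable [RCLike 𝕜]

/-- Both `v* H v` and `v* (HB) v = z · v* H v` are real, so `z` is real unless `v* H v = 0`;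
in that case positivity forces `HBv = z • Hv = 0`. -/
theorem im_eq_zero_of_posSemidef_mul_of_mulVec_eq_smul {H B : Matrix n n 𝕜}
    (hH : H.IsHermitian) (hHinv : IsUnit H) (hB : (H * B).PosSemidef)
    {v : n → 𝕜} (hv0 : v ≠ 0) {z : 𝕜} (hv : B *ᵥ v = z • v) : RCLike.im z = 0 := by
  set c := star v ⬝ᵥ H *ᵥ v
  have hHB : star v ⬝ᵥ (H * B) *ᵥ v = z * c := by
    rw [← mulVec_mulVec, hv, mulVec_smul, dotProduct_smul, smul_eq_mul]
  have hc_im : RCLike.im c = 0 := hH.im_star_dotProduct_mulVec_self v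
  have hzc_im : RCLike.im (z * c) = 0 :=
    (RCLike.nonneg_iff.mp (hHB ▸ hB.dotProduct_mulVec_nonneg v)).2
  rw [RCLike.mul_im, hc_im, mul_zero, zero_add] at hzc_im
  rcases mul_eq_zero.mp hzc_im with hz | hc_re
  · exact hz
  · have hc0 : c = 0 := RCLike.ext (by simpa using hc_re) (by simpa using hc_im)
    have hHBv : (H * B) *ᵥ v = 0 :=
      (hB.dotProduct_mulVec_zero_iff v).mp (by rw [hHB, hc0, mul_zero])
    have hzv : z • v = 0 := by
      apply mulVec_injective_iff_isUnit.mpr hHinv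
      rw [← hv, mulVec_mulVec, hHBv, mulVec_zero]
    simp [(smul_eq_zero.mp hzv).resolve_right hv0]

end Matrix

theorem H_nonnegative_real_spectrum {n : ℕ}
    (H B : Matrix (Fin n) (Fin n) ℂ)
    (hH : H.IsHermitian) (hHinv : IsUnit H)
    (hB : (H * B).PosSemidef) :
    ∀ z ∈ spectrum ℂ B, z.im = 0 := by
  intro z hz
  obtain ⟨v, hv0, hv⟩ := exists_mulVec_eq_smul_of_mem_spectrum hz
  exact im_eq_zero_of_posSemidef_mul_of_mulVec_eq_smul hH hHinv hB hv0 hv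
end
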